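/- arXiv:1911.07576 — 3 statements merged into one kernel-verified Lean document; each statement's English description precedes it below -/
import Mathlib

section
/- If f is a Skolem function with f < 2^{x^x}, then there exists n ∈ ℕ such that f < 2^{n^x}. -/
/-!
Every Skolem function `f` satisfies `1 ≤ f` and a chain of growth gaps: eventually
`f = 1` or `f ≥ 2`; `f ≤ c` or `f ≥ x`; `f ≤ c x` or `f ≥ x²`; `f ≤ c^x` or `f ≥ x^x`;
`f ≤ 2^{c^x}` or `f ≥ 2^{x^x}`, for some constant `c ≥ 1`. Each gap survives `+` and `·`
directly. For `f^g` one may assume `f, g ≥ 2` (otherwise `f^g` is eventually `1` or `f`), and then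
each gap of `f^g` follows from lower gaps of `f` and `g`, e.g. `g ≥ x²` forces
`f^g ≥ 2^{x²} ≥ x^x`. The last gap, together with `f < 2^{x^x}`, gives `f ≤ 2^{c^x}`.
-/

open Filter

/-- The positive real numbers, the domain/codomain of Skolem functions. -/
abbrev Rpos : Type := {x : ℝ // 0 < x}

/-- `Sk f` asserts that `f` is a Skolem function: `Sk` is the smallest set of functions
from `ℝ^{>0}` to `ℝ^{>0}` containing the constant function `1` and the identity, and closed
under pointwise addition, multiplication and exponentiation. -/
inductive Sk : (Rpos → Rpos) → Prop
  | one : Sk fun _ => ⟨1, one_pos⟩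
  | id : Sk fun x => x
  | add : ∀ {f g : Rpos → Rpos}, Sk f → Sk g →
      Sk fun x => ⟨(f x : ℝ) + (g x : ℝ), add_pos (f x).2 (g x).2⟩
  | mul : ∀ {f g : Rpos → Rpos}, Sk f → Sk g →
      Sk fun x => ⟨(f x : ℝ) * (g x : ℝ), mul_pos (f x).2 (g x).2⟩
  | pow : ∀ {f g : Rpos → Rpos}, Sk f → Sk g →
      Sk fun x => ⟨(f x : ℝ) ^ (g x : ℝ), Real.rpow_pos_of_pos (f x).2 _⟩

/-- `f < g` for Skolem functions: `f x < g x` for all sufficiently large `x`. -/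
def SkLt (f g : Rpos → Rpos) : Prop := ∀ᶠ x in atTop, (f x : ℝ) < (g x : ℝ)

/-- `f ≼ g` : `f` is dominated by `g`, i.e. `f ≤ n·g` eventually, for some `n : ℕ`. -/
def SkPreceq (f g : Rpos → Rpos) : Prop := ∃ n : ℕ, ∀ᶠ x in atTop, (f x : ℝ) ≤ n * (g x : ℝ)

lemma skPreceq_refl (f : Rpos → Rpos) : SkPreceq f f :=
  ⟨1, Filter.Eventually.of_forall fun x => by simp⟩

lemma skPreceq_trans {f g h : Rpos → Rpos} (h1 : SkPreceq f g) (h2 : SkPreceq g h) :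
    SkPreceq f h := by
  obtain ⟨n, hn⟩ := h1
  obtain ⟨m, hm⟩ := h2
  refine ⟨n * m, ?_⟩
  filter_upwards [hn, hm] with x hx1 hx2
  calc (f x : ℝ) ≤ n * (g x : ℝ) := hx1
    _ ≤ n * (m * (h x : ℝ)) := mul_le_mul_of_nonneg_left hx2 (Nat.cast_nonneg n)
    _ = (↑(n * m)) * (h x : ℝ) := by push_cast; ring

/-- The setoid on a set `A` of Skolem functions identifying functions in the same
archimedean class (`f ≍ g` iff `f ≼ g` and `g ≼ f`). -/
def skArchSetoid (A : Set (Rpos → Rpos)) : Setoid A :=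
  ⟨fun a b => SkPreceq a.1 b.1 ∧ SkPreceq b.1 a.1,
   ⟨fun _ => ⟨skPreceq_refl _, skPreceq_refl _⟩,
    fun h => ⟨h.2, h.1⟩,
    fun h1 h2 => ⟨skPreceq_trans h1.1 h2.1, skPreceq_trans h2.2 h1.2⟩⟩⟩

/-- The ordering induced by strict domination `≺` on the set of archimedean classes. -/
def skClassLt (A : Set (Rpos → Rpos)) :
    Quotient (skArchSetoid A) → Quotient (skArchSetoid A) → Prop :=
  fun x y => ∃ a b : A, x = Quotient.mk (skArchSetoid A) a ∧ y = Quotient.mk (skArchSetoid A) b ∧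
    SkPreceq a.1 b.1 ∧ ¬ SkPreceq b.1 a.1


/-- The function `2^{x^x}`. -/
noncomputable def twoXX : Rpos → Rpos :=
  fun x => ⟨(2 : ℝ) ^ ((x : ℝ) ^ (x : ℝ)), Real.rpow_pos_of_pos two_pos _⟩

/-- The function `2^{n^x}`. -/
noncomputable def twoPowNPowX (n : ℕ) : Rpos → Rpos :=
  fun x => ⟨(2 : ℝ) ^ ((n : ℝ) ^ (x : ℝ)), Real.rpow_pos_of_pos two_pos _⟩

open Real

lemma Rpos.tendsto_coe_atTop : Tendsto (fun x : Rpos => (x : ℝ)) atTop atTop :=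
  tendsto_Ioi_atTop.1 (tendsto_id (x := (atTop : Filter (Set.Ioi (0 : ℝ)))))

lemma Rpos.eventually_coe {p : ℝ → Prop} (h : ∀ᶠ y in atTop, p y) :
    ∀ᶠ x : Rpos in atTop, p x :=
  tendsto_coe_atTop.eventually h

lemma rpow_le_rpow_of_le_of_le {a b c d : ℝ} (ha : 1 ≤ a) (hab : a ≤ b) (hc : 0 ≤ c)
    (hcd : c ≤ d) : a ^ c ≤ b ^ d :=
  (rpow_le_rpow (by linarith) hab hc).trans (rpow_le_rpow_of_exponent_le (ha.trans hab) hcd)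

lemma two_rpow_rpow_mul_le {c d x : ℝ} (hc : 0 ≤ c) (hd : 0 ≤ d) (hx : 1 ≤ x) :
    (2 : ℝ) ^ c ^ x * 2 ^ d ^ x ≤ 2 ^ (c + d) ^ x := by
  rw [← rpow_add two_pos]
  exact rpow_le_rpow_of_exponent_le one_le_two (add_rpow_le_rpow_add hc hd hx)

lemma eventually_sq_le_two_rpow : ∀ᶠ x : ℝ in atTop, x ^ 2 ≤ 2 ^ x := by
  filter_upwards [(isLittleO_pow_exp_pos_mul_atTop 2 (log_pos one_lt_two)).bound one_pos,
    eventually_ge_atTop 0] with x hx hx0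
  rw [rpow_def_of_pos two_pos]
  simpa [abs_of_nonneg hx0] using hx

lemma eventually_le_two_rpow : ∀ᶠ x : ℝ in atTop, x ≤ 2 ^ x := by
  filter_upwards [eventually_sq_le_two_rpow, eventually_ge_atTop 1] with x hx hx1
  nlinarith

lemma eventually_rpow_self_le_two_rpow_sq : ∀ᶠ x : ℝ in atTop, x ^ x ≤ 2 ^ x ^ 2 := by
  filter_upwards [eventually_le_two_rpow, eventually_ge_atTop 0] with x hx hx0
  calc x ^ x ≤ (2 ^ x) ^ x := rpow_le_rpow hx0 hx hx0
    _ = 2 ^ x ^ 2 := by rw [← rpow_mul zero_le_two, sq]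

def GrowthGap (lo : ℝ → ℝ → ℝ) (hi : ℝ → ℝ) (F : Rpos → ℝ) : Prop :=
  (∃ c, 1 ≤ c ∧ ∀ᶠ x : Rpos in atTop, F x ≤ lo c x) ∨ ∀ᶠ x : Rpos in atTop, hi x ≤ F x

namespace GrowthGap

variable {lo : ℝ → ℝ → ℝ} {hi : ℝ → ℝ} {F G : Rpos → ℝ}

lemma congr (h : GrowthGap lo hi F) (hFG : F =ᶠ[atTop] G) : GrowthGap lo hi G := by
  rcases h with ⟨c, hc, hFc⟩ | hF
  · exact .inl ⟨c, hc, (hFc.and hFG).mono fun _ hx => hx.2 ▸ hx.1⟩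
  · exact .inr ((hF.and hFG).mono fun _ hx => hx.2 ▸ hx.1)

lemma map₂ {op : ℝ → ℝ → ℝ}
    (hmono : ∀ a b a' b', 1 ≤ a → 1 ≤ b → a ≤ a' → b ≤ b' → op a b ≤ op a' b')
    (hle : ∀ a b, 1 ≤ a → 1 ≤ b → a ≤ op a b ∧ b ≤ op a b)
    (hlo : ∀ c d, 1 ≤ c → 1 ≤ d →
      ∃ e, 1 ≤ e ∧ ∀ᶠ x : ℝ in atTop, op (lo c x) (lo d x) ≤ lo e x)
    (hF1 : ∀ᶠ x in atTop, 1 ≤ F x) (hG1 : ∀ᶠ x in atTop, 1 ≤ G x)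
    (hF : GrowthGap lo hi F) (hG : GrowthGap lo hi G) :
    GrowthGap lo hi fun x => op (F x) (G x) := by
  rcases hF with ⟨c, hc, hFc⟩ | hFhi
  · rcases hG with ⟨d, hd, hGd⟩ | hGhi
    · obtain ⟨e, he, hop⟩ := hlo c d hc hd
      refine .inl ⟨e, he, ?_⟩
      filter_upwards [hF1, hG1, hFc, hGd, Rpos.eventually_coe hop] with x hF1 hG1 hFc hGd hop
      exact (hmono _ _ _ _ hF1 hG1 hFc hGd).trans hop
    · refine .inr ?_
      filter_upwards [hF1, hG1, hGhi] with x hF1 hG1 hGhi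
      exact hGhi.trans (hle _ _ hF1 hG1).2
  · refine .inr ?_
    filter_upwards [hF1, hG1, hFhi] with x hF1 hG1 hFhi
    exact hFhi.trans (hle _ _ hF1 hG1).1

lemma add
    (hlo : ∀ c d, 1 ≤ c → 1 ≤ d → ∃ e, 1 ≤ e ∧ ∀ᶠ x : ℝ in atTop, lo c x + lo d x ≤ lo e x)
    (hF1 : ∀ᶠ x in atTop, 1 ≤ F x) (hG1 : ∀ᶠ x in atTop, 1 ≤ G x)
    (hF : GrowthGap lo hi F) (hG : GrowthGap lo hi G) :
    GrowthGap lo hi fun x => F x + G x :=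
  map₂ (fun _ _ _ _ _ _ => add_le_add) (fun _ _ ha hb => ⟨by linarith, by linarith⟩)
    hlo hF1 hG1 hF hG

lemma mul
    (hlo : ∀ c d, 1 ≤ c → 1 ≤ d → ∃ e, 1 ≤ e ∧ ∀ᶠ x : ℝ in atTop, lo c x * lo d x ≤ lo e x)
    (hF1 : ∀ᶠ x in atTop, 1 ≤ F x) (hG1 : ∀ᶠ x in atTop, 1 ≤ G x)
    (hF : GrowthGap lo hi F) (hG : GrowthGap lo hi G) :
    GrowthGap lo hi fun x => F x * G x :=
  map₂ (fun _ _ _ _ ha hb hac hbd => mul_le_mul hac hbd (by linarith) (by linarith))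
    (fun _ _ ha hb => ⟨le_mul_of_one_le_right (by linarith) hb,
      le_mul_of_one_le_left (by linarith) ha⟩)
    hlo hF1 hG1 hF hG

end GrowthGap

structure SkolemGaps (F : Rpos → ℝ) : Prop where
  one_le : ∀ᶠ x in atTop, 1 ≤ F x
  gap_one : GrowthGap (fun _ _ => 1) (fun _ => 2) F
  gap_const : GrowthGap (fun c _ => c) (fun x => x) F
  gap_linear : GrowthGap (fun c x => c * x) (fun x => x ^ 2) F
  gap_exp : GrowthGap (fun c x => c ^ x) (fun x => x ^ x) F
  gap_dexp : GrowthGap (fun c x => 2 ^ c ^ x) (fun x => 2 ^ x ^ x) F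

namespace SkolemGaps

variable {F G : Rpos → ℝ}

lemma congr (h : SkolemGaps F) (hFG : F =ᶠ[atTop] G) : SkolemGaps G where
  one_le := (h.one_le.and hFG).mono fun _ hx => hx.2 ▸ hx.1
  gap_one := h.gap_one.congr hFG
  gap_const := h.gap_const.congr hFG
  gap_linear := h.gap_linear.congr hFG
  gap_exp := h.gap_exp.congr hFG
  gap_dexp := h.gap_dexp.congr hFG

protected lemma one : SkolemGaps fun _ => 1 where
  one_le := .of_forall fun _ => le_rfl
  gap_one := .inl ⟨1, le_rfl, .of_forall fun _ => le_rfl⟩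
  gap_const := .inl ⟨1, le_rfl, .of_forall fun _ => le_rfl⟩
  gap_linear := .inl ⟨1, le_rfl, Rpos.eventually_coe (p := fun x => 1 ≤ 1 * x)
    ((eventually_ge_atTop 1).mono fun _ hx => by rwa [one_mul])⟩
  gap_exp := .inl ⟨1, le_rfl, .of_forall fun _ => (one_rpow _).ge⟩
  gap_dexp := .inl ⟨1, le_rfl, .of_forall fun _ => by simp⟩

protected lemma id : SkolemGaps fun x => (x : ℝ) where
  one_le := Rpos.eventually_coe (eventually_ge_atTop 1)
  gap_one := .inr (Rpos.eventually_coe (eventually_ge_atTop 2))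
  gap_const := .inr (.of_forall fun _ => le_rfl)
  gap_linear := .inl ⟨1, le_rfl, .of_forall fun _ => (one_mul _).ge⟩
  gap_exp := .inl ⟨2, one_le_two, Rpos.eventually_coe eventually_le_two_rpow⟩
  gap_dexp := .inl ⟨2, one_le_two, Rpos.eventually_coe <| eventually_le_two_rpow.mono
    fun _ hx => hx.trans (rpow_le_rpow_of_exponent_le one_le_two hx)⟩

protected lemma add (hF : SkolemGaps F) (hG : SkolemGaps G) : SkolemGaps fun x => F x + G x where
  one_le := by filter_upwards [hF.one_le, hG.one_le] with x hF1 hG1; linarith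
  gap_one := .inr (by filter_upwards [hF.one_le, hG.one_le] with x hF1 hG1; linarith)
  gap_const := hF.gap_const.add (fun c d _ _ => ⟨c + d, by linarith, .of_forall fun _ => le_rfl⟩)
    hF.one_le hG.one_le hG.gap_const
  gap_linear := hF.gap_linear.add
    (fun c d _ _ => ⟨c + d, by linarith, .of_forall fun x => (add_mul c d x).ge⟩)
    hF.one_le hG.one_le hG.gap_linear
  gap_exp := hF.gap_exp.add
    (fun c d _ _ => ⟨c + d, by linarith, (eventually_ge_atTop 1).mono
      fun _ hx => add_rpow_le_rpow_add (by linarith) (by linarith) hx⟩)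
    hF.one_le hG.one_le hG.gap_exp
  gap_dexp := hF.gap_dexp.add
    (fun c d hc hd => ⟨c + d, by linarith, (eventually_ge_atTop 1).mono fun _ hx =>
      (add_le_mul (self_le_rpow_of_one_le one_le_two (one_le_rpow hc (by linarith)))
        (self_le_rpow_of_one_le one_le_two (one_le_rpow hd (by linarith)))).trans
      (two_rpow_rpow_mul_le (by linarith) (by linarith) hx)⟩)
    hF.one_le hG.one_le hG.gap_dexp

lemma gap_linear_mul_of_bounded {c : ℝ} (hc : 1 ≤ c) (hFc : ∀ᶠ x in atTop, F x ≤ c)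
    (hF1 : ∀ᶠ x in atTop, 1 ≤ F x) (hG : SkolemGaps G) :
    GrowthGap (fun c x => c * x) (fun x => x ^ 2) fun x => F x * G x := by
  rcases hG.gap_linear with ⟨d, hd, hGd⟩ | hGsq
  · refine .inl ⟨c * d, one_le_mul_of_one_le_of_one_le hc hd, ?_⟩
    filter_upwards [hFc, hGd, hF1, hG.one_le] with x hFc hGd hF1 hG1
    calc F x * G x ≤ c * (d * x) := mul_le_mul hFc hGd (by linarith) (by linarith)
      _ = c * d * x := by ring
  · refine .inr ?_
    filter_upwards [hGsq, hF1, hG.one_le] with x hGsq hF1 hG1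
    exact hGsq.trans (le_mul_of_one_le_left (by linarith) hF1)

lemma gap_linear_mul (hF : SkolemGaps F) (hG : SkolemGaps G) :
    GrowthGap (fun c x => c * x) (fun x => x ^ 2) fun x => F x * G x := by
  rcases hF.gap_const with ⟨c, hc, hFc⟩ | hFx
  · exact gap_linear_mul_of_bounded hc hFc hF.one_le hG
  rcases hG.gap_const with ⟨d, hd, hGd⟩ | hGx
  · exact (gap_linear_mul_of_bounded hd hGd hG.one_le hF).congr
      (.of_forall fun _ => mul_comm _ _)
  · refine .inr ?_
    filter_upwards [hFx, hGx] with x hFx hGx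
    rw [sq]
    exact mul_le_mul hFx hGx x.2.le (x.2.le.trans hFx)

protected lemma mul (hF : SkolemGaps F) (hG : SkolemGaps G) : SkolemGaps fun x => F x * G x where
  one_le := by
    filter_upwards [hF.one_le, hG.one_le] with x hF1 hG1
    exact one_le_mul_of_one_le_of_one_le hF1 hG1
  gap_one := hF.gap_one.mul (fun _ _ _ _ => ⟨1, le_rfl, .of_forall fun _ => (one_mul 1).le⟩)
    hF.one_le hG.one_le hG.gap_one
  gap_const := hF.gap_const.mul
    (fun c d hc hd => ⟨c * d, one_le_mul_of_one_le_of_one_le hc hd, .of_forall fun _ => le_rfl⟩)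
    hF.one_le hG.one_le hG.gap_const
  gap_linear := hF.gap_linear_mul hG
  gap_exp := hF.gap_exp.mul
    (fun c d hc hd => ⟨c * d, one_le_mul_of_one_le_of_one_le hc hd,
      .of_forall fun _ => (mul_rpow (by linarith) (by linarith)).ge⟩)
    hF.one_le hG.one_le hG.gap_exp
  gap_dexp := hF.gap_dexp.mul
    (fun c d _ _ => ⟨c + d, by linarith, (eventually_ge_atTop 1).mono
      fun _ hx => two_rpow_rpow_mul_le (by linarith) (by linarith) hx⟩)
    hF.one_le hG.one_le hG.gap_dexp

lemma rpow_gap_const (hF : SkolemGaps F) (hG : SkolemGaps G) (hF2 : ∀ᶠ x in atTop, 2 ≤ F x) :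
    GrowthGap (fun c _ => c) (fun x => x) fun x => F x ^ G x := by
  rcases hG.gap_const with ⟨d, hd, hGd⟩ | hGx
  · rcases hF.gap_const with ⟨c, hc, hFc⟩ | hFx
    · refine .inl ⟨c ^ d, one_le_rpow hc (by linarith), ?_⟩
      filter_upwards [hF.one_le, hG.one_le, hFc, hGd] with x hF1 hG1 hFc hGd
      exact rpow_le_rpow_of_le_of_le hF1 hFc (by linarith) hGd
    · refine .inr ?_
      filter_upwards [hF.one_le, hG.one_le, hFx] with x hF1 hG1 hFx
      exact hFx.trans (self_le_rpow_of_one_le hF1 hG1)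
  · refine .inr ?_
    filter_upwards [hF2, hGx, Rpos.eventually_coe eventually_le_two_rpow] with x hF2 hGx hx
    exact hx.trans (rpow_le_rpow_of_le_of_le one_le_two hF2 x.2.le hGx)

lemma rpow_gap_linear (hF : SkolemGaps F) (hG : SkolemGaps G) (hF2 : ∀ᶠ x in atTop, 2 ≤ F x)
    (hG2 : ∀ᶠ x in atTop, 2 ≤ G x) :
    GrowthGap (fun c x => c * x) (fun x => x ^ 2) fun x => F x ^ G x := by
  rcases hG.gap_const with ⟨d, hd, hGd⟩ | hGx
  · rcases hF.gap_const with ⟨c, hc, hFc⟩ | hFx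
    · refine .inl ⟨c ^ d, one_le_rpow hc (by linarith), ?_⟩
      filter_upwards [hF.one_le, hG.one_le, hFc, hGd, Rpos.eventually_coe (eventually_ge_atTop 1)]
        with x hF1 hG1 hFc hGd hx
      exact (rpow_le_rpow_of_le_of_le hF1 hFc (by linarith) hGd).trans
        (le_mul_of_one_le_right (by linarith [one_le_rpow hc (by linarith : (0 : ℝ) ≤ d)]) hx)
    · refine .inr ?_
      filter_upwards [hFx, hG2, Rpos.eventually_coe (eventually_ge_atTop 1)] with x hFx hG2 hx
      rw [← rpow_two]
      exact rpow_le_rpow_of_le_of_le hx hFx zero_le_two hG2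
  · refine .inr ?_
    filter_upwards [hF2, hGx, Rpos.eventually_coe eventually_sq_le_two_rpow] with x hF2 hGx hx
    exact hx.trans (rpow_le_rpow_of_le_of_le one_le_two hF2 x.2.le hGx)

lemma rpow_gap_exp (hF : SkolemGaps F) (hG : SkolemGaps G) (hF2 : ∀ᶠ x in atTop, 2 ≤ F x) :
    GrowthGap (fun c x => c ^ x) (fun x => x ^ x) fun x => F x ^ G x := by
  rcases hG.gap_const with ⟨d, hd, hGd⟩ | hGx
  · rcases hF.gap_exp with ⟨c, hc, hFc⟩ | hFxx
    · refine .inl ⟨c ^ d, one_le_rpow hc (by linarith), ?_⟩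
      filter_upwards [hF.one_le, hG.one_le, hFc, hGd] with x hF1 hG1 hFc hGd
      calc F x ^ G x ≤ (c ^ (x : ℝ)) ^ d := rpow_le_rpow_of_le_of_le hF1 hFc (by linarith) hGd
        _ = (c ^ d) ^ (x : ℝ) := by
          rw [← rpow_mul (by linarith), mul_comm, rpow_mul (by linarith)]
    · refine .inr ?_
      filter_upwards [hF.one_le, hG.one_le, hFxx] with x hF1 hG1 hFxx
      exact hFxx.trans (self_le_rpow_of_one_le hF1 hG1)
  rcases hF.gap_const with ⟨c, hc, hFc⟩ | hFx
  · rcases hG.gap_linear with ⟨d, hd, hGd⟩ | hGsq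
    · refine .inl ⟨c ^ d, one_le_rpow hc (by linarith), ?_⟩
      filter_upwards [hF.one_le, hG.one_le, hFc, hGd] with x hF1 hG1 hFc hGd
      calc F x ^ G x ≤ c ^ (d * x) := rpow_le_rpow_of_le_of_le hF1 hFc (by linarith) hGd
        _ = (c ^ d) ^ (x : ℝ) := rpow_mul (by linarith) _ _
    · refine .inr ?_
      filter_upwards [hF2, hGsq, Rpos.eventually_coe eventually_rpow_self_le_two_rpow_sq]
        with x hF2 hGsq hx
      exact hx.trans (rpow_le_rpow_of_le_of_le one_le_two hF2 (sq_nonneg _) hGsq)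
  · refine .inr ?_
    filter_upwards [hFx, hGx, Rpos.eventually_coe (eventually_ge_atTop 1)] with x hFx hGx hx
    exact rpow_le_rpow_of_le_of_le hx hFx x.2.le hGx

lemma rpow_gap_dexp (hF : SkolemGaps F) (hG : SkolemGaps G) (hF2 : ∀ᶠ x in atTop, 2 ≤ F x) :
    GrowthGap (fun c x => 2 ^ c ^ x) (fun x => 2 ^ x ^ x) fun x => F x ^ G x := by
  rcases hF.gap_dexp with ⟨c, hc, hFc⟩ | hFhi
  · rcases hG.gap_exp with ⟨d, hd, hGd⟩ | hGxx
    · refine .inl ⟨c * d, one_le_mul_of_one_le_of_one_le hc hd, ?_⟩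
      filter_upwards [hF.one_le, hG.one_le, hFc, hGd] with x hF1 hG1 hFc hGd
      calc F x ^ G x ≤ (2 ^ c ^ (x : ℝ)) ^ d ^ (x : ℝ) :=
            rpow_le_rpow_of_le_of_le hF1 hFc (by linarith) hGd
        _ = 2 ^ (c * d) ^ (x : ℝ) := by
          rw [← rpow_mul zero_le_two, mul_rpow (by linarith) (by linarith)]
    · refine .inr ?_
      filter_upwards [hF2, hGxx] with x hF2 hGxx
      exact rpow_le_rpow_of_le_of_le one_le_two hF2 (rpow_nonneg x.2.le _) hGxx
  · refine .inr ?_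
    filter_upwards [hF.one_le, hG.one_le, hFhi] with x hF1 hG1 hFhi
    exact hFhi.trans (self_le_rpow_of_one_le hF1 hG1)

lemma rpow_of_two_le (hF : SkolemGaps F) (hG : SkolemGaps G) (hF2 : ∀ᶠ x in atTop, 2 ≤ F x)
    (hG2 : ∀ᶠ x in atTop, 2 ≤ G x) : SkolemGaps fun x => F x ^ G x where
  one_le := by
    filter_upwards [hF.one_le, hG.one_le] with x hF1 hG1
    exact one_le_rpow hF1 (by linarith)
  gap_one := .inr (by
    filter_upwards [hF2, hF.one_le, hG.one_le] with x hF2 hF1 hG1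
    exact hF2.trans (self_le_rpow_of_one_le hF1 hG1))
  gap_const := hF.rpow_gap_const hG hF2
  gap_linear := hF.rpow_gap_linear hG hF2 hG2
  gap_exp := hF.rpow_gap_exp hG hF2
  gap_dexp := hF.rpow_gap_dexp hG hF2

protected lemma rpow (hF : SkolemGaps F) (hG : SkolemGaps G) : SkolemGaps fun x => F x ^ G x := by
  rcases hF.gap_one with ⟨_, _, hF_le_one⟩ | hF2
  · refine SkolemGaps.one.congr ?_
    filter_upwards [hF_le_one, hF.one_le] with x hFx hF1
    rw [le_antisymm hFx hF1, one_rpow]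
  rcases hG.gap_one with ⟨_, _, hG_le_one⟩ | hG2
  · refine hF.congr ?_
    filter_upwards [hG_le_one, hG.one_le] with x hGx hG1
    rw [le_antisymm hGx hG1, rpow_one]
  exact hF.rpow_of_two_le hG hF2 hG2

end SkolemGaps

theorem Sk.skolemGaps {f : Rpos → Rpos} (hf : Sk f) : SkolemGaps fun x => (f x : ℝ) := by
  induction hf with
  | one => exact SkolemGaps.one
  | id => exact SkolemGaps.id
  | add _ _ ihf ihg => exact ihf.add ihg
  | mul _ _ ihf ihg => exact ihf.mul ihg
  | pow _ _ ihf ihg => exact ihf.rpow ihg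

/-- If `f` is a Skolem function with `f < 2^{x^x}`, then there exists `n ∈ ℕ`
such that `f < 2^{n^x}`. -/
theorem skolem_below_two_x_x_bounded_by_two_n_x (f : Rpos → Rpos) (hf : Sk f)
    (h : SkLt f twoXX) : ∃ n : ℕ, SkLt f (twoPowNPowX n) := by
  rcases hf.skolemGaps.gap_dexp with ⟨c, hc, hfc⟩ | hfhi
  · obtain ⟨n, hn⟩ := exists_nat_gt c
    refine ⟨n, hfc.mono fun x hx => hx.trans_lt ?_⟩
    exact rpow_lt_rpow_of_exponent_lt one_lt_two (rpow_lt_rpow (by linarith) hn x.2)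
  · obtain ⟨x, hlt, hle⟩ := (h.and hfhi).exists
    exact absurd hlt hle.not_gt
end

section
/- If α and β are ordinals with α ≥ β, then α ⊕ β ≤ α + β·2, where ⊕ is the Hessenberg (natural) sum, + is ordinal addition and β·2 is ordinal multiplication. -/
universe u

namespace Ordinal

open Set in
/-- Natural (Hessenberg) addition of ordinals, as defined in the former
`Mathlib.SetTheory.Ordinal.NaturalOps` (removed from Mathlib). -/
noncomputable def nadd (a b : Ordinal.{u}) : Ordinal.{u} :=
  max (⨆ x : Iio a, Order.succ (nadd x.1 b)) (⨆ x : Iio b, Order.succ (nadd a x.1))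
termination_by (a, b)
decreasing_by
  · cases x with | mk v hv => exact Prod.Lex.left _ _ hv
  · cases x with | mk v hv => exact Prod.Lex.right _ hv

end Ordinal

/-!
Let `ω ^ e` be the leading power of `β ≠ 0` and write `α = ω ^ e * q + a`, `β = ω ^ e * n + b`
with `a, b < ω ^ e` and `1 ≤ n < ω`. The natural sum can only merge the parts of `α` and `β`
below `ω ^ (e + 1)`, so `α ♯ β ≤ ω ^ e * (q + n) + (a ♯ b)`. Since `ω ^ e` is closed under `♯`
(by induction on `e`, using the same bound at successor exponents), this is below `ω ^ e * q + ω ^ e * (n + 1) ≤ α + β * 2`.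
-/

namespace Ordinal

local infixl:65 " ♯ " => nadd

theorem nadd_le_iff {a b c : Ordinal.{u}} :
    a ♯ b ≤ c ↔ (∀ a' < a, a' ♯ b < c) ∧ ∀ b' < b, a ♯ b' < c := by
  rw [nadd, max_le_iff, Ordinal.iSup_le_iff, Ordinal.iSup_le_iff]
  simp only [Order.succ_le_iff, Subtype.forall, Set.mem_Iio]

theorem nadd_lt_nadd_left {b c : Ordinal.{u}} (h : b < c) (a : Ordinal.{u}) : a ♯ b < a ♯ c :=
  (nadd_le_iff.1 le_rfl).2 b h

theorem nadd_lt_nadd_right {a b : Ordinal.{u}} (h : a < b) (c : Ordinal.{u}) : a ♯ c < b ♯ c :=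
  (nadd_le_iff.1 le_rfl).1 a h

theorem nadd_zero (a : Ordinal.{u}) : a ♯ 0 = a := by
  induction a using WellFoundedLT.induction with
  | ind a ih =>
    refine le_antisymm (nadd_le_iff.2 ⟨fun a' ha' => (ih a' ha').trans_lt ha', fun b' hb' =>
      absurd hb' not_lt_zero⟩) ?_
    exact StrictMono.le_apply (f := (· ♯ 0)) fun x y h => nadd_lt_nadd_right h 0

theorem mul_add_lt_mul_of_add_one_le {b c u v : Ordinal} (hc : c < b) (huv : u + 1 ≤ v) :
    b * u + c < b * v :=
  calc b * u + c < b * (u + 1) := by rw [mul_add_one]; exact add_lt_add_right hc _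
    _ ≤ b * v := mul_le_mul_right huv b

theorem add_add_one_le_add_of_lt {q' q n : Ordinal} (hq : q' < q) (hn : n < ω) :
    q' + n + 1 ≤ q + n := by
  obtain ⟨k, rfl⟩ := lt_omega0.1 hn
  rw [add_assoc, Nat.cast_add_one_comm, ← add_assoc]
  exact add_le_add_left (Order.add_one_le_of_lt hq) _

theorem mod_lt_mod_of_lt_of_div_eq {a' a b : Ordinal} (h : a' < a) (hdiv : a' / b = a / b) :
    a' % b < a % b := by
  rw [← div_add_mod a' b, ← div_add_mod a b, hdiv] at h
  exact (add_lt_add_iff_left _).1 h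

theorem nadd_le_mul_add_nadd_mod {b : Ordinal} (hb : IsPrincipal nadd b) (hb0 : b ≠ 0)
    (a : Ordinal) {c : Ordinal} (hc : c < b * ω) :
    a ♯ c ≤ b * (a / b + c / b) + (a % b ♯ c % b) := by
  induction a using WellFoundedLT.induction generalizing c with
  | ind a iha =>
  induction c using WellFoundedLT.induction with
  | ind c ihc =>
  have hfin : c / b < ω := (lt_mul_iff_div_lt hb0).1 hc
  refine nadd_le_iff.2 ⟨fun a' ha' => (iha a' ha' hc).trans_lt ?_,
    fun c' hc' => (ihc c' hc' (hc'.trans hc)).trans_lt ?_⟩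
  · rcases (div_le_left ha'.le b).lt_or_eq with hdiv | hdiv
    · refine (mul_add_lt_mul_of_add_one_le (hb (mod_lt a' hb0) (mod_lt c hb0))
        (add_add_one_le_add_of_lt hdiv hfin)).trans_le le_self_add
    · rw [hdiv]
      exact add_lt_add_right (nadd_lt_nadd_right (mod_lt_mod_of_lt_of_div_eq ha' hdiv) _) _
  · rcases (div_le_left hc'.le b).lt_or_eq with hdiv | hdiv
    · refine (mul_add_lt_mul_of_add_one_le (hb (mod_lt a hb0) (mod_lt c' hb0)) ?_).trans_le
        le_self_add
      rw [add_assoc]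
      exact add_le_add_right (Order.add_one_le_of_lt hdiv) _
    · rw [hdiv]
      exact add_lt_add_right (nadd_lt_nadd_left (mod_lt_mod_of_lt_of_div_eq hc' hdiv) _) _

theorem isPrincipal_nadd_omega0_opow (e : Ordinal) : IsPrincipal nadd (ω ^ e) := by
  induction e using limitRecOn with
  | zero => rw [opow_zero, isPrincipal_one_iff, nadd_zero]
  | add_one d ih =>
    intro a b ha hb
    rw [← Order.succ_eq_add_one, opow_succ] at ha hb ⊢
    have hω : ω ^ d ≠ 0 := (opow_pos d omega0_pos).ne'
    have hfin : a / ω ^ d + b / ω ^ d < ω :=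
      isPrincipal_add_omega0 ((lt_mul_iff_div_lt hω).1 ha) ((lt_mul_iff_div_lt hω).1 hb)
    exact (nadd_le_mul_add_nadd_mod ih hω a hb).trans_lt <|
      mul_add_lt_mul_of_add_one_le (ih (mod_lt a hω) (mod_lt b hω)) (Order.add_one_le_of_lt hfin)
  | limit e he ih =>
    intro a b ha hb
    have hω : (ω : Ordinal) ≠ 0 := omega0_ne_zero
    obtain ⟨d₁, hd₁, ha⟩ := (lt_opow_of_isSuccLimit hω he).1 ha
    obtain ⟨d₂, hd₂, hb⟩ := (lt_opow_of_isSuccLimit hω he).1 hb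
    have hd : max d₁ d₂ < e := max_lt hd₁ hd₂
    have hpow {d} (h : d ≤ max d₁ d₂) : ω ^ d ≤ ω ^ max d₁ d₂ := opow_le_opow_right omega0_pos h
    exact (ih _ hd (ha.trans_le (hpow le_sup_left)) (hb.trans_le (hpow le_sup_right))).trans
      ((opow_lt_opow_iff_right one_lt_omega0).2 hd)

theorem mul_div_add_one_le_mul_two {b β : Ordinal} (hb : b ≤ β) :
    b * (β / b + 1) ≤ β * 2 := by
  rcases eq_or_ne b 0 with rfl | hb0
  · rw [zero_mul]; exact zero_le
  have hdiv : 1 ≤ β / b := (mul_le_iff_le_div hb0).1 (by rwa [mul_one])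
  calc b * (β / b + 1) ≤ b * (β / b) + b * (β / b) := by
        rw [← mul_add]; exact mul_le_mul_right (add_le_add_right hdiv _) b
    _ ≤ β * 2 := by rw [Ordinal.mul_two]; exact add_le_add (mul_div_le β b) (mul_div_le β b)

end Ordinal

open Ordinal

theorem nadd_le_add_mul_two_general (α β : Ordinal) :
    Ordinal.nadd α β ≤ α + β * 2 := by
  rcases eq_or_ne β 0 with rfl | hβ
  · rw [nadd_zero, zero_mul, add_zero]
  set b := ω ^ log ω β
  have hb0 : b ≠ 0 := (opow_pos _ omega0_pos).ne'
  have hβb : β < b * ω := by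
    rw [← opow_succ]; exact lt_opow_succ_log_self one_lt_omega0 β
  apply le_of_lt
  calc nadd α β ≤ b * (α / b + β / b) + nadd (α % b) (β % b) :=
        nadd_le_mul_add_nadd_mod (isPrincipal_nadd_omega0_opow _) hb0 α hβb
    _ < b * (α / b + β / b + 1) :=
        mul_add_lt_mul_of_add_one_le (isPrincipal_nadd_omega0_opow _ (mod_lt α hb0)
          (mod_lt β hb0)) le_rfl
    _ = b * (α / b) + b * (β / b + 1) := by rw [add_assoc, mul_add]
    _ ≤ α + β * 2 := add_le_add (mul_div_le α b)
        (mul_div_add_one_le_mul_two (opow_log_le_self ω hβ))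

/-- If `α ≥ β`, then `α ⊕ β ≤ α + β·2`, where `⊕` is the Hessenberg
(natural) sum and `+`, `·` are ordinal addition and multiplication. -/
theorem nadd_le_add_mul_two (α β : Ordinal) (h : β ≤ α) :
    Ordinal.nadd α β ≤ α + β * 2 :=
  nadd_le_add_mul_two_general α β
end

section
/- Let G be a linearly ordered abelian group and let A be a subset of the positive elements of G that is well-ordered by the group order, with order type α. Suppose all elements of A lie in pairwise distinct archimedean classes. Then ∑A, the set of all finite sums of one or more elements of A (repetitions allowed), is well-ordered of order type at most ω^α. -/
/-- `a ≼ b` in an ordered abelian group: `a ≤ n • b` for some natural number `n`. -/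
def Preceq {G : Type*} [AddCommGroup G] [LinearOrder G] [IsOrderedAddMonoid G] (a b : G) : Prop :=
  ∃ n : ℕ, a ≤ n • b

/-- `a ≍ b`: `a` and `b` lie in the same archimedean class. -/
def ArchEquiv {G : Type*} [AddCommGroup G] [LinearOrder G] [IsOrderedAddMonoid G] (a b : G) : Prop :=
  Preceq a b ∧ Preceq b a

lemma nsmul_mono_of_le {G : Type*} [AddCommGroup G] [LinearOrder G] [IsOrderedAddMonoid G] {a b : G}
    (h : a ≤ b) (n : ℕ) : n • a ≤ n • b := by
  induction n with
  | zero => simp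
  | succ k ih => simpa [succ_nsmul] using add_le_add ih h

lemma preceq_refl {G : Type*} [AddCommGroup G] [LinearOrder G] [IsOrderedAddMonoid G] (a : G) : Preceq a a :=
  ⟨1, by simp⟩

lemma preceq_trans {G : Type*} [AddCommGroup G] [LinearOrder G] [IsOrderedAddMonoid G] {a b c : G}
    (h1 : Preceq a b) (h2 : Preceq b c) : Preceq a c := by
  obtain ⟨n, hn⟩ := h1
  obtain ⟨m, hm⟩ := h2
  exact ⟨n * m, hn.trans (by rw [mul_comm n m, mul_nsmul]; exact nsmul_mono_of_le hm n)⟩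

/-- The setoid on a set `A` identifying elements in the same archimedean class. -/
def archSetoid {G : Type*} [AddCommGroup G] [LinearOrder G] [IsOrderedAddMonoid G] (A : Set G) : Setoid A :=
  ⟨fun a b => ArchEquiv a.1 b.1,
   ⟨fun _ => ⟨preceq_refl _, preceq_refl _⟩,
    fun h => ⟨h.2, h.1⟩,
    fun h1 h2 => ⟨preceq_trans h1.1 h2.1, preceq_trans h2.2 h1.2⟩⟩⟩

/-- The ordering induced by strict domination `≺` on the set of archimedean classes. -/
def archClassLt {G : Type*} [AddCommGroup G] [LinearOrder G] [IsOrderedAddMonoid G] (A : Set G) :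
    Quotient (archSetoid A) → Quotient (archSetoid A) → Prop :=
  fun x y => ∃ a b : A, x = Quotient.mk (archSetoid A) a ∧ y = Quotient.mk (archSetoid A) b ∧
    Preceq a.1 b.1 ∧ ¬ Preceq b.1 a.1

/-!
Write `x ∈ ∑A` as `∑ n a • a` with `n : A →₀ ℕ`. Since smaller elements of `A` lie in strictly
smaller archimedean classes, the tail of such a sum below `a` is infinitesimal with respect to
`a`, so comparing two sums amounts to comparing their coefficient functions colexicographically.
The Cantor normal form `∑ ω ^ (typein a) * n a` (taken in decreasing order of `a`) is strictly
monotone for the same colexicographic order and stays below `ω ^ α`; composing, `∑A` embeds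
strictly monotonically into the ordinals below `ω ^ α`.
-/

namespace Finsupp

variable {ι M : Type*} [LinearOrder ι]

theorem filter_gt_add_single_add_filter_lt [AddMonoid M] (f : ι →₀ M) (i : ι) :
    f.filter (i < ·) + (single i (f i) + f.filter (· < i)) = f := by
  ext j
  rcases lt_trichotomy i j with h | rfl | h
  · simp [h, h.not_gt, h.ne]
  · simp
  · simp [h, h.not_gt, h.ne']

theorem filter_gt_eq_filter_gt [Zero M] {f g : ι →₀ M} {i : ι} (h : ∀ j, i < j → f j = g j) :
    f.filter (i < ·) = g.filter (i < ·) := by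
  ext j
  simp only [filter_apply]
  split_ifs with hj
  exacts [h j hj, rfl]

end Finsupp

namespace Ordinal

open Finsupp

namespace CNF

theorem eval_eq_eval_filter_gt_add (b e : Ordinal) (f : Ordinal →₀ Ordinal) :
    eval b f = eval b (f.filter (e < ·)) + (b ^ e * f e + eval b (f.filter (· < e))) := by
  conv_lhs => rw [← f.filter_gt_add_single_add_filter_lt e]
  rw [eval_add, eval_single_add']
  · intro e' he'
    exact (Finset.mem_filter.1 he').2
  · intro e₁ h₁ e₂ h₂
    refine le_of_lt (lt_of_le_of_lt ?_ (Finset.mem_filter.1 h₁).2)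
    rcases Finset.mem_union.1 (support_add h₂) with h₂ | h₂
    · exact (Finset.mem_singleton.1 (support_single_subset h₂)).le
    · exact (Finset.mem_filter.1 h₂).2.le

theorem eval_lt_eval_of_toColex_lt {b : Ordinal} {f g : Ordinal →₀ Ordinal} (hb : ∀ e, f e < b)
    (h : toColex f < toColex g) : eval b f < eval b g := by
  obtain ⟨e, hhi, hlt⟩ := Colex.lt_iff.1 h
  simp only [ofColex_toColex] at hhi hlt
  rw [eval_eq_eval_filter_gt_add b e f, eval_eq_eval_filter_gt_add b e g,
    filter_gt_eq_filter_gt hhi]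
  refine add_lt_add_right ?_ _
  have hlow : eval b (f.filter (· < e)) < b ^ e := by
    refine eval_lt (fun e' => ?_) fun e' he' => (Finset.mem_filter.1 he').2
    rw [filter_apply]
    split_ifs
    exacts [hb e', (hb e').pos]
  calc b ^ e * f e + eval b (f.filter (· < e)) < b ^ e * f e + b ^ e := add_lt_add_right hlow _
    _ = b ^ e * Order.succ (f e) := (mul_succ _ _).symm
    _ ≤ b ^ e * g e := mul_le_mul_right (Order.succ_le_of_lt hlt) _
    _ ≤ b ^ e * g e + eval b (g.filter (· < e)) := le_self_add

end CNF

theorem exists_isWellOrder_type_le_of_strictMono {β : Type*} [LinearOrder β] {f : β → Ordinal}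
    {o : Ordinal} (hf : StrictMono f) (hlt : ∀ x, f x < o) :
    ∃ _ : IsWellOrder β (· < ·), typeLT β ≤ o := by
  have := hf.wellFoundedLT
  refine ⟨inferInstance, ?_⟩
  have emb : (· < · : β → β → Prop) ↪r (· < · : o.ToType → o.ToType → Prop) :=
    RelEmbedding.ofMonotone (fun x => ToType.mk ⟨f x, hlt x⟩) fun _ _ h =>
      ToType.mk.lt_iff_lt.2 (hf h)
  simpa using type_le_iff'.2 ⟨emb⟩

end Ordinal

section CNFEval

open Finsupp Ordinal

variable {ι : Type*} [LinearOrder ι]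

noncomputable def cnfEval (e : ι ↪o Ordinal) (f : ι →₀ ℕ) : Ordinal :=
  CNF.eval ω ((f.mapRange ((↑) : ℕ → Ordinal) Nat.cast_zero).embDomain e.toEmbedding)

theorem embDomain_natCast_lt_omega0 (e : ι ↪o Ordinal) (f : ι →₀ ℕ) (o : Ordinal) :
    (f.mapRange ((↑) : ℕ → Ordinal) Nat.cast_zero).embDomain e.toEmbedding o < ω := by
  rw [embDomain_apply]
  split_ifs
  · exact natCast_lt_omega0 _
  · exact omega0_pos

theorem embDomain_natCast_apply_self (e : ι ↪o Ordinal) (f : ι →₀ ℕ) (i : ι) :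
    (f.mapRange ((↑) : ℕ → Ordinal) Nat.cast_zero).embDomain e.toEmbedding (e i) =
      (f i : Ordinal) :=
  embDomain_apply_self e.toEmbedding _ i

theorem cnfEval_lt_opow (e : ι ↪o Ordinal) (f : ι →₀ ℕ) {o : Ordinal} (he : ∀ i, e i < o) :
    cnfEval e f < ω ^ o := by
  refine CNF.eval_lt (embDomain_natCast_lt_omega0 e f) fun e' he' => ?_
  rw [support_embDomain, Finset.mem_map] at he'
  obtain ⟨i, -, rfl⟩ := he'
  exact he i

theorem cnfEval_strictMono (e : ι ↪o Ordinal) :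
    StrictMono fun f : Colex (ι →₀ ℕ) => cnfEval e (ofColex f) := by
  intro f g h
  obtain ⟨i, hhi, hlt⟩ := Colex.lt_iff.1 h
  refine CNF.eval_lt_eval_of_toColex_lt (embDomain_natCast_lt_omega0 e _)
    (Colex.lt_iff.2 ⟨e i, ?_, ?_⟩)
  · intro o hio
    simp only [ofColex_toColex]
    by_cases ho : o ∈ Set.range e
    · obtain ⟨j, rfl⟩ := ho
      rw [embDomain_natCast_apply_self, embDomain_natCast_apply_self, hhi j (e.lt_iff_lt.1 hio)]
    · rw [embDomain_of_notMem_range _ _ _ ho, embDomain_of_notMem_range _ _ _ ho]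
  · rw [ofColex_toColex, ofColex_toColex, embDomain_natCast_apply_self,
      embDomain_natCast_apply_self]
    exact_mod_cast hlt

end CNFEval

section ArchimedeanClass

open ArchimedeanClass Finsupp

variable {G : Type*} [AddCommGroup G] [LinearOrder G] [IsOrderedAddMonoid G]

theorem archEquiv_of_mk_eq {a b : G} (ha : 0 ≤ a) (hb : 0 ≤ b) (h : mk a = mk b) :
    ArchEquiv a b := by
  obtain ⟨⟨m, hm⟩, ⟨n, hn⟩⟩ := mk_eq_mk.1 h
  rw [abs_of_nonneg ha, abs_of_nonneg hb] at hm hn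
  exact ⟨⟨n, hn⟩, ⟨m, hm⟩⟩

theorem strictAnti_mk_of_archEquiv_imp_eq {A : Set G} (hpos : ∀ a ∈ A, 0 < a)
    (hdist : ∀ a ∈ A, ∀ b ∈ A, ArchEquiv a b → a = b) :
    StrictAnti fun a : A => mk (a : G) := by
  intro a b hab
  refine (mk_antitoneOn (hpos a a.2).le (hpos b b.2).le hab.le).lt_of_ne fun h => hab.ne' ?_
  exact Subtype.ext (hdist b b.2 a a.2 (archEquiv_of_mk_eq (hpos b b.2).le (hpos a a.2).le h))

variable {ι : Type*} {v : ι → G}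

theorem linearCombination_mem_ballAddSubgroup {c : ArchimedeanClass G} (hc : c ≠ ⊤)
    {f : ι →₀ ℕ} (hf : ∀ i ∈ f.support, c < mk (v i)) :
    linearCombination ℕ v f ∈ c.ballAddSubgroup := by
  rw [linearCombination_apply, Finsupp.sum]
  exact AddSubgroup.sum_mem _ fun i hi =>
    AddSubgroup.nsmul_mem _ ((mem_ballAddSubgroup_iff hc).2 (hf i hi)) _

theorem linearCombination_strictMono [LinearOrder ι] (hpos : ∀ i, 0 < v i)
    (hv : StrictAnti (mk ∘ v)) :
    StrictMono fun f : Colex (ι →₀ ℕ) => linearCombination ℕ v (ofColex f) := by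
  intro f g h
  obtain ⟨i, hhi, hlt⟩ := Colex.lt_iff.1 h
  have hsplit (φ : ι →₀ ℕ) : linearCombination ℕ v φ = linearCombination ℕ v (φ.filter (i < ·)) +
      (φ i • v i + linearCombination ℕ v (φ.filter (· < i))) := by
    conv_lhs => rw [← φ.filter_gt_add_single_add_filter_lt i]
    simp only [map_add, linearCombination_single]
  have hlow (φ : ι →₀ ℕ) :
      linearCombination ℕ v (φ.filter (· < i)) ∈ (mk (v i)).ballAddSubgroup :=
    linearCombination_mem_ballAddSubgroup (mk_eq_top_iff.not.2 (hpos i).ne')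
      fun j hj => hv (Finset.mem_filter.1 hj).2
  have hsmall : linearCombination ℕ v ((ofColex f).filter (· < i)) -
      linearCombination ℕ v ((ofColex g).filter (· < i)) < v i :=
    lt_of_mk_lt_mk_of_nonneg ((mem_ballAddSubgroup_iff (mk_eq_top_iff.not.2 (hpos i).ne')).1
      (sub_mem (hlow _) (hlow _))) (hpos i).le
  dsimp only
  rw [hsplit, hsplit (ofColex g), filter_gt_eq_filter_gt hhi]
  refine add_lt_add_right ?_ _
  calc (ofColex f) i • v i + linearCombination ℕ v ((ofColex f).filter (· < i))
      < (ofColex f) i • v i + (v i + linearCombination ℕ v ((ofColex g).filter (· < i))) := by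
        gcongr
        exact sub_lt_iff_lt_add.1 hsmall
    _ = ((ofColex f) i + 1) • v i + linearCombination ℕ v ((ofColex g).filter (· < i)) := by
        rw [succ_nsmul]; abel
    _ ≤ (ofColex g) i • v i + linearCombination ℕ v ((ofColex g).filter (· < i)) := by
        gcongr
        exacts [(hpos i).le, hlt]

end ArchimedeanClass

theorem exists_linearCombination_eq_of_mem_closure {M : Type*} [AddCommMonoid M] {A : Set M}
    {x : M} (hx : x ∈ AddSubsemigroup.closure A) :
    ∃ f : A →₀ ℕ, Finsupp.linearCombination ℕ (↑) f = x := by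
  refine (Finsupp.mem_span_iff_linearCombination ℕ A x).1 ?_
  exact AddSubsemigroup.closure_le.2 (Submodule.subset_span (R := ℕ)) hx

/-- Let `G` be a linearly ordered abelian group and `A` a set of positive
elements of `G`, well-ordered by the group order with order type `α`, all of whose elements
lie in pairwise distinct archimedean classes. Then the additive subsemigroup generated by
`A` (the set of finite sums of one or more elements of `A`) is well-ordered of order type
at most `ω^α`. -/
theorem sums_of_distinct_archimedean_classes {G : Type*} [AddCommGroup G] [LinearOrder G] [IsOrderedAddMonoid G]
    (A : Set G) (hApos : ∀ a ∈ A, 0 < a) (α : Ordinal)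
    (hwo : IsWellOrder A (fun a b => (a : G) < (b : G)))
    (htype : @Ordinal.type _ _ hwo = α)
    (hdist : ∀ a ∈ A, ∀ b ∈ A, ArchEquiv a b → a = b) :
    ∃ hwo' : IsWellOrder (AddSubsemigroup.closure A) (fun a b => (a : G) < (b : G)),
      @Ordinal.type _ _ hwo' ≤ Ordinal.omega0 ^ α := by
  let idx : A ↪o Ordinal := OrderEmbedding.ofStrictMono (@Ordinal.typein A (· < ·) hwo)
    fun a b h => (@Ordinal.typein_lt_typein A (· < ·) hwo a b).2 h
  have hidx (a : A) : idx a < α := htype ▸ @Ordinal.typein_lt_type A (· < ·) hwo a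
  have hsum := linearCombination_strictMono (fun a : A => hApos a a.2)
    (strictAnti_mk_of_archEquiv_imp_eq hApos hdist)
  choose r hr using fun x : AddSubsemigroup.closure A =>
    exists_linearCombination_eq_of_mem_closure x.2
  have hr_mono : StrictMono fun x => toColex (r x) := fun x y hxy =>
    hsum.lt_iff_lt.1 (by simp only [ofColex_toColex, hr]; exact hxy)
  exact Ordinal.exists_isWellOrder_type_le_of_strictMono ((cnfEval_strictMono idx).comp hr_mono)
    fun x => cnfEval_lt_opow idx (r x) hidx
end
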